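/- A strict square root s on a pseudo MV-algebra is standard, i.e., s(x) ⊙ s(0) = s(0) ⊙ s(x) for all x. -/

import Mathlib

/-- A pseudo MV-algebra `(M; ⊕, ⁻, ∼, 0, 1)` satisfying axioms (A1)–(A8),
with `x ⊙ y := (y⁻ ⊕ x⁻)∼`. -/
class PseudoMV (M : Type*) where
  oplus : M → M → M
  lneg : M → M
  rneg : M → M
  zero : M
  one : M
  oplus_assoc : ∀ x y z : M, oplus x (oplus y z) = oplus (oplus x y) z
  oplus_zero : ∀ x : M, oplus x zero = x
  zero_oplus : ∀ x : M, oplus zero x = x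
  oplus_one : ∀ x : M, oplus x one = one
  one_oplus : ∀ x : M, oplus one x = one
  lneg_one : lneg one = zero
  rneg_one : rneg one = zero
  a5 : ∀ x y : M, rneg (oplus (lneg x) (lneg y)) = lneg (oplus (rneg x) (rneg y))
  a6₁ : ∀ x y : M,
    oplus x (rneg (oplus (lneg y) (lneg (rneg x)))) =
      oplus y (rneg (oplus (lneg x) (lneg (rneg y))))
  a6₂ : ∀ x y : M,
    oplus x (rneg (oplus (lneg y) (lneg (rneg x)))) =
      oplus (rneg (oplus (lneg (lneg y)) (lneg x))) y
  a6₃ : ∀ x y : M,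
    oplus x (rneg (oplus (lneg y) (lneg (rneg x)))) =
      oplus (rneg (oplus (lneg (lneg x)) (lneg y))) x
  a7 : ∀ x y : M,
    rneg (oplus (lneg (oplus (lneg x) y)) (lneg x)) =
      rneg (oplus (lneg y) (lneg (oplus x (rneg y))))
  a8 : ∀ x : M, rneg (lneg x) = x

namespace PseudoMV

variable {M : Type*} [PseudoMV M]

/-- `x ⊙ y := (y⁻ ⊕ x⁻)∼`. -/
def mul (x y : M) : M := rneg (oplus (lneg y) (lneg x))

/-- `x ∨ y = x ⊕ (x∼ ⊙ y)` (axiom (A6)). -/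
def sup (x y : M) : M := oplus x (mul (rneg x) y)

/-- `x ∧ y = x ⊙ (x⁻ ⊕ y)` (axiom (A7)). -/
def inf (x y : M) : M := mul x (oplus (lneg x) y)

/-- The lattice order of a pseudo MV-algebra. -/
def le (x y : M) : Prop := sup x y = y

/-- `x → y := x⁻ ⊕ y`. -/
def arrow (x y : M) : M := oplus (lneg x) y

/-- `x ⇝ y := y ⊕ x∼`. -/
def squig (x y : M) : M := oplus y (rneg x)

/-- A weak square root: (Sq1) and (Sq2). -/
def IsWeakSqrt (r : M → M) : Prop :=
  (∀ x : M, mul (r x) (r x) = x) ∧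
  (∀ x y : M, le (mul y y) x → le y (r x))

/-- A square root: (Sq1), (Sq2) and (Sq3). -/
def IsSqrt (r : M → M) : Prop :=
  IsWeakSqrt r ∧
  (∀ x : M, r (lneg x) = arrow (r x) (r zero) ∧ r (rneg x) = squig (r x) (r zero))

end PseudoMV

open PseudoMV

/-!
Put `u = s(0) ⊙ s(x)` and `v = s(x) ⊙ s(0)`. Strictness turns (Sq3) into `s(x⁻) = u⁻` and
`s(x∼) = v∼`, and then (Sq1) gives `u ⊕ u = x = v ⊕ v`. Hence `v⁻ ⊙ v⁻ = x⁻` and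
`u∼ ⊙ u∼ = x∼`, so (Sq2) yields `v⁻ ≤ u⁻` and `u∼ ≤ v∼`, which together force `u = v`.
-/

namespace PseudoMV

variable {M : Type*} [PseudoMV M]

theorem lneg_rneg (x : M) : lneg (rneg x) = x := by
  have h := a5 x (one : M)
  rw [lneg_one, rneg_one, oplus_zero, oplus_zero] at h
  rw [← h, a8]

theorem lneg_injective : Function.Injective (lneg : M → M) := fun x y h => by
  rw [← a8 x, h, a8]

theorem rneg_injective : Function.Injective (rneg : M → M) := fun x y h => by
  rw [← lneg_rneg x, h, lneg_rneg]

theorem oplus_rneg_self (x : M) : oplus x (rneg x) = one := by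
  simpa only [lneg_one, zero_oplus, a8, one_oplus] using a6₁ x (one : M)

theorem lneg_oplus_self (x : M) : oplus (lneg x) x = one := by
  simpa only [one_oplus, lneg_one, oplus_zero, a8] using (a6₂ (one : M) x).symm

theorem lneg_mul (x y : M) : lneg (mul x y) = oplus (lneg y) (lneg x) :=
  lneg_rneg _

theorem rneg_mul (x y : M) : rneg (mul x y) = oplus (rneg y) (rneg x) := by
  rw [mul, a5, a8]

theorem mul_lneg_self (x : M) : mul (lneg x) (lneg x) = lneg (oplus x x) := by
  rw [mul, a5, a8]

theorem mul_rneg_self (x : M) : mul (rneg x) (rneg x) = rneg (oplus x x) := by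
  rw [mul, lneg_rneg]

theorem le_refl (x : M) : le x x := by
  unfold le sup mul
  rw [lneg_rneg, lneg_oplus_self, rneg_one, oplus_zero]

theorem lneg_oplus_eq_one_of_le {x y : M} (h : le x y) : oplus (lneg x) y = one := by
  unfold le sup at h
  rw [← h, oplus_assoc, lneg_oplus_self, one_oplus]

theorem oplus_rneg_eq_one_of_le {x y : M} (h : le x y) : oplus y (rneg x) = one := by
  have h6 := a6₃ x y
  unfold le sup mul at h
  rw [h] at h6
  rw [h6, ← oplus_assoc, oplus_rneg_self, oplus_one]

/-- `v⁻ ≤ u⁻` says `u ≤ v` and `u∼ ≤ v∼` says `v ≤ u`; axiom (A7) supplies the antisymmetry. -/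
theorem eq_of_lneg_le_lneg_of_rneg_le_rneg {u v : M} (hl : le (lneg v) (lneg u))
    (hr : le (rneg u) (rneg v)) : u = v := by
  have huv : oplus (lneg u) v = one := by
    simpa only [a8] using oplus_rneg_eq_one_of_le hl
  have hvu : oplus u (rneg v) = one := by
    simpa only [lneg_rneg] using lneg_oplus_eq_one_of_le hr
  have h7 := a7 u v
  rwa [huv, hvu, lneg_one, zero_oplus, oplus_zero, a8, a8] at h7

namespace IsWeakSqrt

variable {r : M → M} {x : M}

theorem oplus_self_eq_of_apply_lneg_eq {u : M} (hr : IsWeakSqrt r) (h : r (lneg x) = lneg u) :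
    oplus u u = x := by
  apply lneg_injective
  rw [← mul_lneg_self, ← h, hr.1]

theorem oplus_self_eq_of_apply_rneg_eq {v : M} (hr : IsWeakSqrt r) (h : r (rneg x) = rneg v) :
    oplus v v = x := by
  apply rneg_injective
  rw [← mul_rneg_self, ← h, hr.1]

theorem lneg_le_apply_lneg {v : M} (hr : IsWeakSqrt r) (h : oplus v v = x) :
    le (lneg v) (r (lneg x)) :=
  hr.2 _ _ (by rw [mul_lneg_self, h]; exact le_refl _)

theorem rneg_le_apply_rneg {u : M} (hr : IsWeakSqrt r) (h : oplus u u = x) :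
    le (rneg u) (r (rneg x)) :=
  hr.2 _ _ (by rw [mul_rneg_self, h]; exact le_refl _)

end IsWeakSqrt

namespace IsSqrt

variable {s : M → M}

theorem apply_lneg_of_strict (hs : IsSqrt s) (hstrict : s zero = lneg (s zero)) (x : M) :
    s (lneg x) = lneg (mul (s zero) (s x)) := by
  rw [(hs.2 x).1, arrow, lneg_mul, ← hstrict]

theorem apply_rneg_of_strict (hs : IsSqrt s) (hstrict : s zero = lneg (s zero)) (x : M) :
    s (rneg x) = rneg (mul (s x) (s zero)) := by
  have hr0 : rneg (s zero) = s zero := by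
    conv_lhs => rw [hstrict]
    exact a8 _
  rw [(hs.2 x).2, squig, rneg_mul, hr0]

end IsSqrt

end PseudoMV

theorem stmt15 {M : Type*} [PseudoMV M] (s : M → M) (hs : IsSqrt s)
    (hstrict : s zero = lneg (s zero)) :
    ∀ x : M, mul (s x) (s zero) = mul (s zero) (s x) := by
  intro x
  have hu := hs.apply_lneg_of_strict hstrict x
  have hv := hs.apply_rneg_of_strict hstrict x
  have hxu := hs.1.oplus_self_eq_of_apply_lneg_eq hu
  have hxv := hs.1.oplus_self_eq_of_apply_rneg_eq hv
  refine (eq_of_lneg_le_lneg_of_rneg_le_rneg ?_ ?_).symm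
  · exact hu ▸ hs.1.lneg_le_apply_lneg hxv
  · exact hv ▸ hs.1.rneg_le_apply_rneg hxu
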